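/- arXiv:2410.02032 — 3 statements merged into one kernel-verified Lean document; each statement's English description precedes it below -/
import Mathlib

section
/- For any factorially closed language L over a finite alphabet, p_L(n+2) − 2p_L(n+1) + p_L(n) = Σ_{w ∈ L, |w|=n} m(w), where m(w) = |E(w)| − |E^L(w)| − |E^R(w)| + 1, with E(w) = {(a,b) : awb ∈ L}, E^L(w) = {a : aw ∈ L}, E^R(w) = {b : wb ∈ L}. -/
private lemma list_decomp_aux {α : Type*} (u : List α) (h : u ≠ []) (h' : u.tail ≠ []) :
    u.head h :: (u.tail.dropLast ++ [u.tail.getLast h']) = u := by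
  conv_rhs => rw [← List.cons_head_tail h, ← List.dropLast_append_getLast h']

/-- Second complexity difference formula: for a factorially closed language `L`
over a finite alphabet,
`p_L(n+2) - 2 p_L(n+1) + p_L(n) = Σ_{|w|=n, w ∈ L} m(w)` where
`m(w) = |E(w)| - |E^L(w)| - |E^R(w)| + 1`. -/
theorem complexity_second_difference {A : Type*} [Fintype A] (L : Set (List A))
    (hfac : ∀ v w : List A, v <:+: w → w ∈ L → v ∈ L) (n : ℕ) :
    ({w ∈ L | w.length = n + 2}.ncard : ℤ) - 2 * ({w ∈ L | w.length = n + 1}.ncard : ℤ)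
        + ({w ∈ L | w.length = n}.ncard : ℤ) =
      ∑ᶠ w ∈ {w ∈ L | w.length = n},
        (({p : A × A | [p.1] ++ w ++ [p.2] ∈ L}.ncard : ℤ)
          - ({a : A | [a] ++ w ∈ L}.ncard : ℤ)
          - ({b : A | w ++ [b] ∈ L}.ncard : ℤ) + 1) := by
  classical
  have hfin : ∀ m : ℕ, {w ∈ L | w.length = m}.Finite := fun m =>
    (List.finite_length_eq A m).subset (fun w hw => hw.2)
  set S : ℕ → Finset (List A) := fun m => (hfin m).toFinset with hSdef
  have hmem : ∀ m u, u ∈ S m ↔ u ∈ L ∧ u.length = m := by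
    intro m u; simp [hSdef, Set.Finite.mem_toFinset]
  have hcard : ∀ m : ℕ, {w ∈ L | w.length = m}.ncard = (S m).card := fun m =>
    Set.ncard_eq_toFinset_card _ (hfin m)
  -- key identity for pairs
  have key2 : (S (n + 2)).card
      = ∑ w ∈ S n, {p : A × A | [p.1] ++ w ++ [p.2] ∈ L}.ncard := by
    rw [Finset.card_eq_sum_card_fiberwise
      (f := fun u : List A => u.tail.dropLast) (t := S n) ?_]
    · refine Finset.sum_congr rfl fun w hw => ?_
      rw [hmem] at hw
      rw [Set.ncard_eq_toFinset_card' _]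
      refine (Finset.card_bij (fun p _ => p.1 :: (w ++ [p.2])) ?_ ?_ ?_).symm
      · intro p hp
        simp only [Set.mem_toFinset, Set.mem_setOf_eq] at hp
        simp only [Finset.mem_filter, hmem]
        refine ⟨⟨?_, by simp [hw.2]⟩, by simp [List.dropLast_concat]⟩
        simpa using hp
      · intro p hp q hq h
        simp only [List.cons.injEq] at h
        have h2 := List.append_inj_right h.2 rfl
        simp only [List.cons.injEq] at h2
        exact Prod.ext h.1 h2.1
      · intro u hu
        simp only [Finset.mem_filter, hmem] at hu
        obtain ⟨⟨huL, hulen⟩, hmid⟩ := hu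
        have hne : u ≠ [] := by intro h; simp [h] at hulen
        have htne : u.tail ≠ [] := by
          intro h
          have := u.length_tail
          rw [h] at this
          simp [hulen] at this
        have hdec := list_decomp_aux u hne htne
        rw [hmid] at hdec
        refine ⟨(u.head hne, u.tail.getLast htne), ?_, ?_⟩
        · simp only [Set.mem_toFinset, Set.mem_setOf_eq]
          have h3 : [u.head hne] ++ w ++ [u.tail.getLast htne] = u := by
            simpa [List.append_assoc] using hdec
          rw [h3]; exact huL
        · exact hdec
    · intro u hu
      rw [Finset.mem_coe, hmem] at hu
      have hne : u ≠ [] := by intro h; rw [h] at hu; simp at hu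
      have htne : u.tail ≠ [] := by
        intro h
        have := u.length_tail
        rw [h] at this
        simp [hu.2] at this
      have hdec := list_decomp_aux u hne htne
      rw [Finset.mem_coe, hmem]
      constructor
      · exact hfac _ _ ⟨[u.head hne], [u.tail.getLast htne], by
          simpa [List.append_assoc] using hdec⟩ hu.1
      · show u.tail.dropLast.length = n
        have h1 := u.length_tail
        have h2 := u.tail.length_dropLast
        omega
  -- key identity for left extensions
  have keyl : (S (n + 1)).card = ∑ w ∈ S n, {a : A | [a] ++ w ∈ L}.ncard := by
    rw [Finset.card_eq_sum_card_fiberwise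
      (f := fun u : List A => u.tail) (t := S n) ?_]
    · refine Finset.sum_congr rfl fun w hw => ?_
      rw [hmem] at hw
      rw [Set.ncard_eq_toFinset_card' _]
      refine (Finset.card_bij (fun a _ => a :: w) ?_ ?_ ?_).symm
      · intro a ha
        simp only [Set.mem_toFinset, Set.mem_setOf_eq] at ha
        simp only [Finset.mem_filter, hmem]
        exact ⟨⟨by simpa using ha, by simp [hw.2]⟩, by simp⟩
      · intro a _ b _ h
        simpa using h
      · intro u hu
        simp only [Finset.mem_filter, hmem] at hu
        obtain ⟨⟨huL, hulen⟩, htl⟩ := hu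
        have hne : u ≠ [] := by intro h; rw [h] at hulen; simp at hulen
        have hdec := List.cons_head_tail hne
        rw [htl] at hdec
        refine ⟨u.head hne, ?_, hdec⟩
        simp only [Set.mem_toFinset, Set.mem_setOf_eq, List.singleton_append]
        rw [hdec]; exact huL
    · intro u hu
      rw [Finset.mem_coe, hmem] at hu
      have hne : u ≠ [] := by intro h; rw [h] at hu; simp at hu
      rw [Finset.mem_coe, hmem]
      refine ⟨hfac _ _ ⟨[u.head hne], [], by
        simp [List.cons_head_tail]⟩ hu.1, ?_⟩
      show u.tail.length = n
      have := u.length_tail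
      omega
  -- key identity for right extensions
  have keyr : (S (n + 1)).card = ∑ w ∈ S n, {b : A | w ++ [b] ∈ L}.ncard := by
    rw [Finset.card_eq_sum_card_fiberwise
      (f := fun u : List A => u.dropLast) (t := S n) ?_]
    · refine Finset.sum_congr rfl fun w hw => ?_
      rw [hmem] at hw
      rw [Set.ncard_eq_toFinset_card' _]
      refine (Finset.card_bij (fun b _ => w ++ [b]) ?_ ?_ ?_).symm
      · intro b hb
        simp only [Set.mem_toFinset, Set.mem_setOf_eq] at hb
        simp only [Finset.mem_filter, hmem]
        exact ⟨⟨hb, by simp [hw.2]⟩, by simp [List.dropLast_concat]⟩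
      · intro a _ b _ h
        have := List.append_inj_right h rfl
        simpa using this
      · intro u hu
        simp only [Finset.mem_filter, hmem] at hu
        obtain ⟨⟨huL, hulen⟩, hdl⟩ := hu
        have hne : u ≠ [] := by intro h; rw [h] at hulen; simp at hulen
        have hdec := List.dropLast_append_getLast hne
        rw [hdl] at hdec
        refine ⟨u.getLast hne, ?_, hdec⟩
        simp only [Set.mem_toFinset, Set.mem_setOf_eq]
        rw [hdec]; exact huL
    · intro u hu
      rw [Finset.mem_coe, hmem] at hu
      have hne : u ≠ [] := by intro h; rw [h] at hu; simp at hu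
      rw [Finset.mem_coe, hmem]
      refine ⟨hfac _ _ ⟨[], [u.getLast hne], by
        simp [List.dropLast_append_getLast]⟩ hu.1, ?_⟩
      show u.dropLast.length = n
      have := u.length_dropLast
      omega
  rw [finsum_mem_eq_finite_toFinset_sum _ (hfin n)]
  have hSn : (hfin n).toFinset = S n := rfl
  rw [hSn]
  rw [Finset.sum_add_distrib, Finset.sum_sub_distrib, Finset.sum_sub_distrib]
  rw [hcard, hcard, hcard]
  have hlr : (∑ w ∈ S n, ({a : A | [a] ++ w ∈ L}.ncard : ℤ))
      = ∑ w ∈ S n, ({b : A | w ++ [b] ∈ L}.ncard : ℤ) := by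
    exact_mod_cast keyl.symm.trans keyr
  push_cast [key2, keyl]
  rw [Finset.sum_const, nsmul_eq_mul, mul_one, ← hlr]
  ring
end

section
/- Let T_G be the Gauss map of the (e,13,e) TRIP map, with branches T_k^G(x,y,z) = ((x−kz)/(y+z), ((k+1)z−x)/(y+z), y/(y+z)) on Δ_k^G = {(x,y,z) ∈ Δ : kz ≤ x < (k+1)z}. Define π_B(x,y,z) = z/(x+z) on B = {(x,y,z) ∈ Δ : y ≥ z, (x,y,z) ≠ (0,1,0)}, π_A(x,y,z) = y/(x+y) on A \ {(0,0,1)}, and F_k(γ) = k + 2 − 1/γ. Then for every p ∈ B ∩ Δ_k^G with π_B(p) ∈ [1/(k+2), 1/(k+1)), one has π_A(T_k^G(p)) = F_k(π_B(p)), i.e., the diagram π_A ∘ T_k^G = F_k ∘ π_B commutes on B ∩ Δ_k^G. -/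
/-- Semiconjugacy for the hidden ℝ² behavior of the (e,13,e) TRIP map:
with `π_B(x,y,z) = z/(x+z)` on `B`, `π_A(x,y,z) = y/(x+y)` on `A`, and
`F_k(γ) = k + 2 - 1/γ`, the diagram `π_A ∘ T_k^G = F_k ∘ π_B` commutes on
`B ∩ Δ_k^G` (for points with `π_B(p) ∈ [1/(k+2), 1/(k+1))`). -/
theorem e13e_semiconjugacy (k : ℕ) (x y z : ℝ)
    (hx : 0 ≤ x) (hy : 0 ≤ y) (hz : 0 ≤ z) (hsum : x + y + z = 1)
    (hB : z ≤ y) (hne : (x, y, z) ≠ ((0 : ℝ), (1 : ℝ), (0 : ℝ)))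
    (hk1 : (k : ℝ) * z ≤ x) (hk2 : x < ((k : ℝ) + 1) * z)
    (hI1 : 1 / ((k : ℝ) + 2) ≤ z / (x + z)) (hI2 : z / (x + z) < 1 / ((k : ℝ) + 1)) :
    (((k : ℝ) + 1) * z - x) / (y + z) /
        ((x - (k : ℝ) * z) / (y + z) + (((k : ℝ) + 1) * z - x) / (y + z)) =
      (k : ℝ) + 2 - 1 / (z / (x + z)) := by
  have hzpos : 0 < z := by nlinarith
  have hyz : 0 < y + z := by linarith
  have hxz : 0 < x + z := by linarith
  have hden : (x - (k : ℝ) * z) / (y + z) + (((k : ℝ) + 1) * z - x) / (y + z)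
      = z / (y + z) := by field_simp; ring
  rw [hden, one_div_div]
  rw [div_div_div_cancel_right₀ (hc := hyz.ne')]
  field_simp
  ring
end

section
/- Let G_k be the Gauss substitutions of the (e,13,e) TRIP map: G_k(1) = 1^{k+1} 3, G_k(2) = 1^k 3, G_k(3) = 2. Then for every nonnegative integer k and every word v over {1,2,3}, none of the words 12, 22, 33 is a factor of G_k(c) for a single letter c; moreover, for any finite composition w = (G_{j_1} ∘ … ∘ G_{j_m})(c) with m ≥ 1 and c ∈ {1,2,3}, the word 12 is not a factor of w. -/
/-- The Gauss substitution `G_k` of the (e,13,e) TRIP map on `Fin 3`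
(letter `i+1` encoded as `i`): `1 ↦ 1^{k+1}3`, `2 ↦ 1^k 3`, `3 ↦ 2`. -/
def Ge13e (k : ℕ) : Fin 3 → List (Fin 3) := fun c =>
  if c = 0 then List.replicate (k + 1) 0 ++ [2]
  else if c = 1 then List.replicate k 0 ++ [2]
  else [1]

/-- The "no `01` factor" relation. -/
def S01 : Fin 3 → Fin 3 → Prop := fun a b => ¬ (a = 0 ∧ b = 1)

lemma chain_rep2 (n : ℕ) : List.Chain' S01 (List.replicate n (0 : Fin 3) ++ [2]) := by
  induction n with
  | zero => simp [List.Chain']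
  | succ n ih =>
    rw [List.Chain', List.replicate_succ, List.cons_append, List.isChain_cons]
    refine ⟨?_, ih⟩
    intro y hy
    rcases n with _ | m
    · simp at hy
      simp [S01, ← hy]
    · rw [List.replicate_succ, List.cons_append, List.head?_cons] at hy
      simp at hy
      simp [S01, ← hy]

lemma chain_letter (k : ℕ) (c : Fin 3) : List.Chain' S01 (Ge13e k c) := by
  fin_cases c
  · exact chain_rep2 (k + 1)
  · exact chain_rep2 k
  · simp [Ge13e, List.Chain']

lemma last_ne_zero (k : ℕ) (c : Fin 3) :
    ∀ x ∈ (Ge13e k c).getLast?, x ≠ 0 := by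
  fin_cases c <;> simp [Ge13e, List.getLast?_concat]

lemma chain_flat (k : ℕ) : ∀ u : List (Fin 3),
    List.Chain' S01 (u.flatMap (Ge13e k)) := by
  intro u
  induction u with
  | nil => simp [List.Chain']
  | cons c u ih =>
    rw [List.Chain', List.flatMap_cons, List.isChain_append]
    refine ⟨chain_letter k c, ih, ?_⟩
    intro x hx y _
    have hx0 : x ≠ 0 := last_ne_zero k c x hx
    intro ⟨h1, _⟩
    exact hx0 h1

lemma not_infix_of_chain {l : List (Fin 3)} (h : List.Chain' S01 l) :
    ¬ ([0, 1] <:+: l) := by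
  intro hinf
  have := h.infix hinf
  rw [List.isChain_cons_cons] at this
  exact this.1 ⟨rfl, rfl⟩

/-- None of `12`, `22`, `33` (encoded `[0,1]`, `[1,1]`, `[2,2]`) is a factor of
`G_k(c)` for a single letter `c`; moreover `12` is never a factor of any
composition of Gauss substitutions applied to a single letter. -/
theorem e13e_forbidden_factors :
    (∀ (k : ℕ) (c : Fin 3),
      ¬ ([0,1] <:+: Ge13e k c) ∧ ¬ ([1,1] <:+: Ge13e k c) ∧ ¬ ([2,2] <:+: Ge13e k c)) ∧
    (∀ (ks : List ℕ) (c : Fin 3), ks ≠ [] →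
      ¬ ([0,1] <:+: ks.foldr (fun k w => w.flatMap (Ge13e k)) [c])) := by
  constructor
  · intro k c
    refine ⟨not_infix_of_chain (chain_letter k c), ?_, ?_⟩
    · -- [1,1] : would require 1 ∈ Ge13e k c with length ≥ 2
      intro h
      fin_cases c
      · have : (1 : Fin 3) ∈ List.replicate (k + 1) (0 : Fin 3) ++ [2] := by
          exact h.subset (by simp)
        simp [List.mem_replicate] at this
      · have : (1 : Fin 3) ∈ List.replicate k (0 : Fin 3) ++ [2] := by
          exact h.subset (by simp)
        simp [List.mem_replicate] at this
      · have := h.length_le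
        simp [Ge13e] at this
    · -- [2,2] : count of 2 is at most 1
      intro h
      have hc := h.sublist.count_le (2 : Fin 3)
      fin_cases c <;> simp [Ge13e, List.count_replicate] at hc
  · intro ks c hne
    rcases ks with _ | ⟨k, ks⟩
    · exact absurd rfl hne
    · rw [List.foldr_cons]
      exact not_infix_of_chain (chain_flat k _)
end
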